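/- Suppose ε, W : ℝ × ℝ → ℝ are smooth with ε > 0, τ̂(z,t) := W(z,t)/ε(z,t) is independent of z, W satisfies ∂W/∂t = -∂Q/∂z - α(1 + a τ̂² N²) W/τ̂ where Q = -δ τ̂ W ∂W/∂z, and ε satisfies ∂ε/∂t = ∂/∂z(δ τ̂ W ∂ε/∂z) - ρ(1 + a τ̂² N²) ε/τ̂. Then τ̂ satisfies the ODE dτ̂/dt = (ρ - α)(1 + a τ̂² N²). -/

import Mathlib

theorem stmt_7 (α δ ρ a N2 : ℝ) (hδ : 0 < δ)
    (ε W : ℝ → ℝ → ℝ) (τ : ℝ → ℝ)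
    (hεsmooth : ContDiff ℝ (⊤ : ℕ∞) fun p : ℝ × ℝ => ε p.1 p.2)
    (hWsmooth : ContDiff ℝ (⊤ : ℕ∞) fun p : ℝ × ℝ => W p.1 p.2)
    (hεpos : ∀ z t, 0 < ε z t)
    (hτpos : ∀ t, 0 < τ t)
    -- τ̂ = W/ε is independent of z
    (hτ : ∀ z t, τ t = W z t / ε z t)
    -- equation (1.1) for W = ⟨w²⟩ with ⟨w³⟩ = Q = -δ τ W W_z
    (hW : ∀ z t, HasDerivAt (fun t' => W z t')
      (-(deriv (fun z' => -δ * τ t * W z' t * deriv (fun z'' => W z'' t) z') z)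
        - α * (1 + a * (τ t) ^ 2 * N2) * W z t / τ t) t)
    -- equation (1.3) for ε
    (hε : ∀ z t, HasDerivAt (fun t' => ε z t')
      (deriv (fun z' => δ * τ t * W z' t * deriv (fun z'' => ε z'' t) z') z
        - ρ * (1 + a * (τ t) ^ 2 * N2) * ε z t / τ t) t) :
    ∀ t, HasDerivAt τ ((ρ - α) * (1 + a * (τ t) ^ 2 * N2)) t := by
  intro t
  have hεne : ∀ z t, ε z t ≠ 0 := fun z t => (hεpos z t).ne'
  have hτne : τ t ≠ 0 := (hτpos t).ne'
  -- W z t = τ t * ε z t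
  have hWε : ∀ z t, W z t = τ t * ε z t := by
    intro z t
    have := hτ z t
    rw [eq_div_iff (hεne z t)] at this
    linarith
  -- smoothness in z
  have hεz : ∀ s : ℝ, ContDiff ℝ (⊤ : ℕ∞) (fun z => ε z s) := by
    intro s
    exact hεsmooth.comp (contDiff_id.prodMk contDiff_const)
  have hεz' : ∀ s : ℝ, Differentiable ℝ (deriv (fun z => ε z s)) := by
    intro s
    exact ((contDiff_infty_iff_deriv.mp ((hεz s).of_le (by simp))).2).differentiable (by simp)
  -- derivative of W in z
  have hWfun : ∀ s : ℝ, (fun z => W z s) = fun z => τ s * ε z s := by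
    intro s; funext z; exact hWε z s
  have hWderiv : ∀ s z : ℝ, deriv (fun z'' => W z'' s) z
      = τ s * deriv (fun z'' => ε z'' s) z := by
    intro s z
    rw [hWfun s]
    exact deriv_const_mul (τ s) ((hεz s).differentiable (by simp) z)
  set D : ℝ := deriv (fun z' => ε z' t * deriv (fun z'' => ε z'' t) z') 0 with hD
  have hdiffE : Differentiable ℝ (fun z' => ε z' t * deriv (fun z'' => ε z'' t) z') :=
    ((hεz t).differentiable (by simp)).mul (hεz' t)
  -- deriv of Q-term for W
  have hQW : deriv (fun z' => -δ * τ t * W z' t * deriv (fun z'' => W z'' t) z') 0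
      = -δ * (τ t) ^ 3 * D := by
    have h1 : (fun z' => -δ * τ t * W z' t * deriv (fun z'' => W z'' t) z')
        = fun z' => (-δ * (τ t) ^ 3) * (ε z' t * deriv (fun z'' => ε z'' t) z') := by
      funext z'
      rw [hWε z' t, hWderiv t z']
      ring
    rw [h1, deriv_const_mul _ (hdiffE 0)]
  -- deriv of Q-term for ε
  have hQε : deriv (fun z' => δ * τ t * W z' t * deriv (fun z'' => ε z'' t) z') 0
      = δ * (τ t) ^ 2 * D := by
    have h1 : (fun z' => δ * τ t * W z' t * deriv (fun z'' => ε z'' t) z')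
        = fun z' => (δ * (τ t) ^ 2) * (ε z' t * deriv (fun z'' => ε z'' t) z') := by
      funext z'
      rw [hWε z' t]
      ring
    rw [h1, deriv_const_mul _ (hdiffE 0)]
  have hWd := hW 0 t
  have hεd := hε 0 t
  rw [hQW] at hWd
  rw [hQε] at hεd
  have hquot := hWd.div hεd (hεne 0 t)
  have hτeq : τ =ᶠ[nhds t] fun t' => W 0 t' / ε 0 t' :=
    Filter.Eventually.of_forall (fun t' => hτ 0 t')
  have hfinal := hquot.congr_of_eventuallyEq hτeq
  refine hfinal.congr_deriv ?_
  have h0 : W 0 t = τ t * ε 0 t := hWε 0 t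
  rw [h0]
  field_simp [hτne, hεne 0 t]
  ring
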